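/- arXiv:2508.09553 — 7 statements merged into one kernel-verified Lean document; each statement's English description precedes it below -/
import Mathlib

section
/- Let Φ and Φ' be two middle grounds for the same non-trivial stakeholder sets Φ_1,…,Φ_n. Then either Φ ≡ Φ' (they entail each other) or Φ ∪ Φ' is inconsistent. -/
variable {M L : Type*}

/-- `π ⊨ Φ`: model `π` satisfies all statements of `Φ`. -/
def SatSet (sat : M → L → Prop) (π : M) (Φ : Set L) : Prop := ∀ φ ∈ Φ, sat π φ

/-- `Φ ⊨ Ψ`: every model of `Φ` is a model of `Ψ`. -/
def Entails (sat : M → L → Prop) (Φ Ψ : Set L) : Prop :=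
  ∀ π : M, SatSet sat π Φ → SatSet sat π Ψ

def Consistent (sat : M → L → Prop) (Φ : Set L) : Prop := ∃ π : M, SatSet sat π Φ

def Falsifiable (sat : M → L → Prop) (Φ : Set L) : Prop := ∃ π : M, ¬ SatSet sat π Φ

def NonTrivial (sat : M → L → Prop) (Φ : Set L) : Prop :=
  Consistent sat Φ ∧ Falsifiable sat Φ

/-- `Φ ≡ Ψ`. -/
def EquivS (sat : M → L → Prop) (Φ Ψ : Set L) : Prop :=
  Entails sat Φ Ψ ∧ Entails sat Ψ Φ

/-- Postulate P1. -/
def P1 (sat : M → L → Prop) (Φ : Set L) : Prop := NonTrivial sat Φ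

/-- Postulate P2 for stakeholder sets `St`. -/
def P2 (sat : M → L → Prop) {n : ℕ} (St : Fin n → Set L) (Φ : Set L) : Prop :=
  Consistent sat (⋃ i, St i) → EquivS sat Φ (⋃ i, St i)

/-- Postulate P3. -/
def P3 (sat : M → L → Prop) {n : ℕ} (St : Fin n → Set L) (Φ : Set L) : Prop :=
  ∀ φ ∈ Φ, ∀ i : Fin n, ∀ ψ ∈ St i, ∃ π : M, sat π φ ∧ sat π ψ

/-- Postulate P4. -/
def P4 (sat : M → L → Prop) {n : ℕ} (St : Fin n → Set L) (Φ : Set L) : Prop :=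
  ∀ φ ∈ Φ, ∃ i : Fin n, Entails sat (St i) {φ}

/-- Postulate P5. -/
def P5 (sat : M → L → Prop) {n : ℕ} (St : Fin n → Set L) (Φ : Set L) : Prop :=
  ¬ ∃ Φ' : Set L, (P1 sat Φ' ∧ P2 sat St Φ' ∧ P3 sat St Φ' ∧ P4 sat St Φ') ∧
      Entails sat Φ' Φ ∧ ¬ Entails sat Φ Φ'

/-- Middle ground: satisfies P1–P5. -/
def MiddleGround (sat : M → L → Prop) {n : ℕ} (St : Fin n → Set L) (Φ : Set L) : Prop :=
  P1 sat Φ ∧ P2 sat St Φ ∧ P3 sat St Φ ∧ P4 sat St Φ ∧ P5 sat St Φ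

/-- Two middle grounds for the same stakeholders are either equivalent or
jointly inconsistent. -/
theorem middleGrounds_equiv_or_inconsistent [Finite L]
    (sat : M → L → Prop) {n : ℕ} (St : Fin n → Set L)
    (hnt : ∀ i : Fin n, NonTrivial sat (St i))
    (Φ Φ' : Set L)
    (h : MiddleGround sat St Φ) (h' : MiddleGround sat St Φ') :
    EquivS sat Φ Φ' ∨ ¬ Consistent sat (Φ ∪ Φ') := by
  by_cases hc : Consistent sat (Φ ∪ Φ')
  · left
    obtain ⟨⟨hcons, ⟨πf, hπf⟩⟩, h2, h3, h4, h5⟩ := h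
    obtain ⟨⟨hcons', hfals'⟩, h2', h3', h4', h5'⟩ := h'
    have hsubL : ∀ π, SatSet sat π (Φ ∪ Φ') → SatSet sat π Φ := by
      intro π hπ φ hφ; exact hπ φ (Set.mem_union_left _ hφ)
    have hsubR : ∀ π, SatSet sat π (Φ ∪ Φ') → SatSet sat π Φ' := by
      intro π hπ φ hφ; exact hπ φ (Set.mem_union_right _ hφ)
    -- The union satisfies P1–P4
    have HP1 : P1 sat (Φ ∪ Φ') := by
      refine ⟨hc, ⟨πf, fun hs => hπf (hsubL πf hs)⟩⟩
    have HP2 : P2 sat St (Φ ∪ Φ') := by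
      intro hSt
      obtain ⟨he1, he2⟩ := h2 hSt
      obtain ⟨he1', he2'⟩ := h2' hSt
      constructor
      · intro π hπ; exact he1 π (hsubL π hπ)
      · intro π hπ φ hφ
        rcases hφ with hφ | hφ
        · exact he2 π hπ φ hφ
        · exact he2' π hπ φ hφ
    have HP3 : P3 sat St (Φ ∪ Φ') := by
      intro φ hφ i ψ hψ
      rcases hφ with hφ | hφ
      · exact h3 φ hφ i ψ hψ
      · exact h3' φ hφ i ψ hψ
    have HP4 : P4 sat St (Φ ∪ Φ') := by
      intro φ hφ
      rcases hφ with hφ | hφ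
      · exact h4 φ hφ
      · exact h4' φ hφ
    have hEL : Entails sat (Φ ∪ Φ') Φ := fun π hπ => hsubL π hπ
    have hER : Entails sat (Φ ∪ Φ') Φ' := fun π hπ => hsubR π hπ
    -- P5 forces Φ ⊨ Φ ∪ Φ' and Φ' ⊨ Φ ∪ Φ'
    have hΦ : Entails sat Φ (Φ ∪ Φ') := by
      by_contra hcon
      exact h5 ⟨Φ ∪ Φ', ⟨HP1, HP2, HP3, HP4⟩, hEL, hcon⟩
    have hΦ' : Entails sat Φ' (Φ ∪ Φ') := by
      by_contra hcon
      exact h5' ⟨Φ ∪ Φ', ⟨HP1, HP2, HP3, HP4⟩, hER, hcon⟩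
    exact ⟨fun π hπ => hsubR π (hΦ π hπ), fun π hπ => hsubL π (hΦ' π hπ)⟩
  · exact Or.inr hc
end

section
/- A non-strict preference statement α ≥ β is a tautology (satisfied by every hierarchical model) if and only if for every non-empty subset Y ⊆ V, ⊕_{y∈Y} α(y) ≥ ⊕_{y∈Y} β(y). Moreover, this holds if and only if β > α is a contradiction (satisfied by no hierarchical model). -/
/-- Aggregate `⊕_{y ∈ Y} α(y)` of an alternative `α` over a (nonempty) set of
variables `Y`, for a commutative associative operation `op`. -/
noncomputable def agg {V W : Type*} [DecidableEq V] [Nonempty W]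
    (op : W → W → W) [Std.Commutative op] [Std.Associative op]
    (α : V → W) (Y : Finset V) : W :=
  if h : Y.Nonempty then (Y.erase h.choose).fold op (α h.choose) α
  else Classical.arbitrary W

/-- `α ⪰_π β` for a hierarchical model `π` (a sequence of variable sets):
lexicographic comparison of the level-wise aggregates. -/
noncomputable def HGe {V W : Type*} [DecidableEq V] [Nonempty W] [LinearOrder W]
    (op : W → W → W) [Std.Commutative op] [Std.Associative op]
    (π : List (Finset V)) (α β : V → W) : Prop :=
  (∀ Y ∈ π, agg op α Y = agg op β Y) ∨
  ∃ i : Fin π.length, agg op α (π.get i) > agg op β (π.get i) ∧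
    ∀ j : Fin π.length, (j : ℕ) < (i : ℕ) → agg op α (π.get j) = agg op β (π.get j)

/-- `α ≻_π β`: strict lexicographic comparison of the level-wise aggregates. -/
noncomputable def HGt {V W : Type*} [DecidableEq V] [Nonempty W] [LinearOrder W]
    (op : W → W → W) [Std.Commutative op] [Std.Associative op]
    (π : List (Finset V)) (α β : V → W) : Prop :=
  ∃ i : Fin π.length, agg op α (π.get i) > agg op β (π.get i) ∧
    ∀ j : Fin π.length, (j : ℕ) < (i : ℕ) → agg op α (π.get j) = agg op β (π.get j)

/-- A hierarchical model is a non-empty sequence of non-empty sets of variables. -/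
def ValidH {V : Type*} (π : List (Finset V)) : Prop :=
  π ≠ [] ∧ ∀ Y ∈ π, Y.Nonempty

/-! A one-level model `[Y]` compares exactly the aggregates over `Y`, so a tautology forces
`agg α Y ≥ agg β Y` for every nonempty `Y`, and a model `[Y]` with `agg β Y > agg α Y` would
satisfy `β > α`. Conversely, if `α` wins or ties at every level, then in any model either all
levels tie or the first level that does not tie is won by `α`, and `β` can never win first. -/

theorem validH_singleton_iff {V : Type*} {Y : Finset V} : ValidH [Y] ↔ Y.Nonempty := by
  simp [ValidH]

section Lexicographic

variable {V W : Type*} [DecidableEq V] [Nonempty W] [LinearOrder W]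
  (op : W → W → W) [Std.Commutative op] [Std.Associative op]

theorem hGe_of_forall_mem_agg_le {π : List (Finset V)} {α β : V → W}
    (h : ∀ Y ∈ π, agg op β Y ≤ agg op α Y) : HGe op π α β := by
  by_cases heq : ∀ Y ∈ π, agg op α Y = agg op β Y
  · exact Or.inl heq
  have hne : ∃ i : Fin π.length, agg op α (π.get i) ≠ agg op β (π.get i) := by
    push Not at heq
    obtain ⟨Y, hY, hY_ne⟩ := heq
    obtain ⟨i, rfl⟩ := List.get_of_mem hY
    exact ⟨i, hY_ne⟩
  obtain ⟨i, hi, hmin⟩ :=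
    wellFounded_lt.has_min {i | agg op α (π.get i) ≠ agg op β (π.get i)} hne
  refine Or.inr ⟨i, lt_of_le_of_ne (h _ (π.get_mem i)) hi.symm, fun j hj => ?_⟩
  by_contra hj_ne
  exact hmin j hj_ne hj

theorem not_hGt_of_forall_mem_agg_le {π : List (Finset V)} {α β : V → W}
    (h : ∀ Y ∈ π, agg op β Y ≤ agg op α Y) : ¬ HGt op π β α :=
  fun ⟨i, hi, _⟩ => (h _ (π.get_mem i)).not_gt hi

theorem hGe_singleton_iff {Y : Finset V} {α β : V → W} :
    HGe op [Y] α β ↔ agg op β Y ≤ agg op α Y := by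
  simp [HGe, le_iff_eq_or_lt, eq_comm]

theorem hGt_singleton_iff {Y : Finset V} {α β : V → W} :
    HGt op [Y] α β ↔ agg op β Y < agg op α Y := by
  simp [HGt]

end Lexicographic

/-- `α ≥ β` is a tautology iff every nonempty set of variables has
`⊕`-aggregate of `α` at least that of `β`, iff `β > α` is a contradiction. -/
theorem nonstrict_tautology_iff {V W : Type*} [DecidableEq V] [Nonempty W] [LinearOrder W]
    (op : W → W → W) [Std.Commutative op] [Std.Associative op]
    (α β : V → W) :
    ((∀ π : List (Finset V), ValidH π → HGe op π α β) ↔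
      (∀ Y : Finset V, Y.Nonempty → agg op α Y ≥ agg op β Y)) ∧
    ((∀ π : List (Finset V), ValidH π → HGe op π α β) ↔
      (∀ π : List (Finset V), ValidH π → ¬ HGt op π β α)) := by
  have taut_iff : (∀ π : List (Finset V), ValidH π → HGe op π α β) ↔
      (∀ Y : Finset V, Y.Nonempty → agg op α Y ≥ agg op β Y) :=
    ⟨fun h Y hY => (hGe_singleton_iff op).1 (h [Y] (validH_singleton_iff.2 hY)),
      fun h π hπ => hGe_of_forall_mem_agg_le op fun Y hY => h Y (hπ.2 Y hY)⟩
  have contra_iff : (∀ π : List (Finset V), ValidH π → ¬ HGt op π β α) ↔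
      (∀ Y : Finset V, Y.Nonempty → agg op α Y ≥ agg op β Y) :=
    ⟨fun h Y hY => not_lt.1 fun hlt =>
        h [Y] (validH_singleton_iff.2 hY) ((hGt_singleton_iff op).2 hlt),
      fun h π hπ => not_hGt_of_forall_mem_agg_le op fun Y hY => h Y (hπ.2 Y hY)⟩
  exact ⟨taut_iff, taut_iff.trans contra_iff.symm⟩
end

section
/- A strict preference statement α > β is a tautology (satisfied by every hierarchical model) if and only if for every non-empty subset Y ⊆ V, ⊕_{y∈Y} α(y) > ⊕_{y∈Y} β(y). Moreover, this holds if and only if β ≥ α is a contradiction. -/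
theorem validH_singleton {V : Type*} {Y : Finset V} (hY : Y.Nonempty) : ValidH [Y] :=
  ⟨List.cons_ne_nil _ _, by simpa using hY⟩

section Hierarchical

variable {V W : Type*} [DecidableEq V] [Nonempty W] [LinearOrder W]
  (op : W → W → W) [Std.Commutative op] [Std.Associative op]

theorem hGt_cons_of_agg_gt {Y : Finset V} (π : List (Finset V)) {α β : V → W}
    (h : agg op β Y < agg op α Y) : HGt op (Y :: π) α β :=
  ⟨⟨0, by simp⟩, h, fun _ hj => absurd hj (Nat.not_lt_zero _)⟩

theorem HGt.not_hGe {π : List (Finset V)} {α β : V → W} (h : HGt op π α β) :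
    ¬ HGe op π β α := by
  obtain ⟨i, hi, hbefore_i⟩ := h
  rintro (hall | ⟨j, hj, hbefore_j⟩)
  · exact hi.ne (hall _ (List.get_mem π i))
  · rcases lt_trichotomy (j : ℕ) i with hji | hji | hij
    · exact hj.ne (hbefore_i j hji)
    · cases Fin.ext hji
      exact lt_asymm hi hj
    · exact hi.ne (hbefore_j i hij)

end Hierarchical

/-- `α > β` is a tautology iff every nonempty set of variables has
`⊕`-aggregate of `α` strictly above that of `β`, iff `β ≥ α` is a contradiction. -/
theorem strict_tautology_iff {V W : Type*} [DecidableEq V] [Nonempty W] [LinearOrder W]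
    (op : W → W → W) [Std.Commutative op] [Std.Associative op]
    (α β : V → W) :
    ((∀ π : List (Finset V), ValidH π → HGt op π α β) ↔
      (∀ Y : Finset V, Y.Nonempty → agg op α Y > agg op β Y)) ∧
    ((∀ π : List (Finset V), ValidH π → HGt op π α β) ↔
      (∀ π : List (Finset V), ValidH π → ¬ HGe op π β α)) := by
  have pointwise : (∀ π : List (Finset V), ValidH π → HGt op π α β) ↔
      (∀ Y : Finset V, Y.Nonempty → agg op α Y > agg op β Y) := by
    refine ⟨fun h Y hY => (hGt_singleton_iff op).1 (h [Y] (validH_singleton hY)),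
      fun h π hπ => ?_⟩
    obtain ⟨Y, π', rfl⟩ := List.exists_cons_of_ne_nil hπ.1
    exact hGt_cons_of_agg_gt op π' (h Y (hπ.2 Y List.mem_cons_self))
  refine ⟨pointwise, fun h π hπ => (h π hπ).not_hGe op, fun h => pointwise.2 fun Y hY => ?_⟩
  exact not_le.1 (mt (hGe_singleton_iff op).2 (h [Y] (validH_singleton hY)))
end

section
/- If the strict statement α > β is non-trivial (satisfied by some hierarchical model, and not satisfied by some model), then either α ≥ β is also non-trivial, or both of the following hold: (a) ⊕_{y∈Y} α(y) ≥ ⊕_{y∈Y} β(y) for every non-empty Y ⊆ V, and (b) there exists a non-empty Y ⊆ V with ⊕_{y∈Y} α(y) = ⊕_{y∈Y} β(y). -/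
/-- If the strict statement `α > β` is non-trivial then either `α ≥ β` is
non-trivial, or `α`'s aggregate weakly dominates `β`'s on every nonempty set of
variables with equality on some nonempty set. -/
theorem nonstrict_of_strict_nontrivial {V W : Type*} [DecidableEq V] [Nonempty W] [LinearOrder W]
    (op : W → W → W) [Std.Commutative op] [Std.Associative op]
    (α β : V → W)
    (hcon : ∃ π : List (Finset V), ValidH π ∧ HGt op π α β)
    (hfal : ∃ π : List (Finset V), ValidH π ∧ ¬ HGt op π α β) :
    ((∃ π : List (Finset V), ValidH π ∧ HGe op π α β) ∧
     (∃ π : List (Finset V), ValidH π ∧ ¬ HGe op π α β)) ∨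
    ((∀ Y : Finset V, Y.Nonempty → agg op α Y ≥ agg op β Y) ∧
     (∃ Y : Finset V, Y.Nonempty ∧ agg op α Y = agg op β Y)) := by
  by_cases h : ∃ π : List (Finset V), ValidH π ∧ ¬ HGe op π α β
  · left
    obtain ⟨π, hv, ht⟩ := hcon
    exact ⟨⟨π, hv, Or.inr ht⟩, h⟩
  · right
    push_neg at h
    constructor
    · intro Y hY
      have hv : ValidH [Y] := ⟨by simp, by simpa using hY⟩
      rcases h [Y] hv with h1 | ⟨i, hi, _⟩
      · exact le_of_eq (h1 Y (by simp)).symm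
      · rcases i with ⟨n, hn⟩
        have hn0 : n = 0 := by simpa using hn
        subst hn0
        exact le_of_lt hi
    · obtain ⟨π, hv, hnt⟩ := hfal
      rcases h π hv with h1 | h2
      · obtain ⟨Y, hY⟩ := List.exists_mem_of_ne_nil π hv.1
        exact ⟨Y, hv.2 Y hY, h1 Y hY⟩
      · exact absurd h2 hnt
end

section
/- Binarization preserves satisfaction under lexicographic models: given alternatives α, β over variables V with linearly ordered domains, define binary alternatives α^b, β^b over V with values in {0,1} by α^b(v)=1, β^b(v)=0 if α(v)>β(v); α^b(v)=0, β^b(v)=1 if α(v)<β(v); α^b(v)=β^b(v)=0 if α(v)=β(v). Then for every lexicographic model π (a non-empty sequence of distinct single variables), π satisfies α ≥ β if and only if π satisfies α^b ≥ β^b, and π satisfies α > β if and only if π satisfies α^b > β^b. -/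
/-- `π ⊨ α ≥ β` for a lexicographic model `π` (a sequence of variables). -/
def LexGe {V W : Type*} [LinearOrder W] (π : List V) (α β : V → W) : Prop :=
  (∀ v ∈ π, α v = β v) ∨
  ∃ i : Fin π.length, α (π.get i) > β (π.get i) ∧
    ∀ j : Fin π.length, (j : ℕ) < (i : ℕ) → α (π.get j) = β (π.get j)

/-- `π ⊨ α > β` for a lexicographic model `π`. -/
def LexGt {V W : Type*} [LinearOrder W] (π : List V) (α β : V → W) : Prop :=
  ∃ i : Fin π.length, α (π.get i) > β (π.get i) ∧
    ∀ j : Fin π.length, (j : ℕ) < (i : ℕ) → α (π.get j) = β (π.get j)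

lemma binarize_key {W : Type*} [LinearOrder W] (a b : W) :
    (a = b ↔ (if b < a then (1:ℕ) else 0) = (if a < b then (1:ℕ) else 0)) ∧
    (b < a ↔ (if a < b then (1:ℕ) else 0) < (if b < a then (1:ℕ) else 0)) := by
  rcases lt_trichotomy a b with h | h | h
  · simp [h, not_lt_of_gt h, h.ne, h.ne']
  · simp [h]
  · simp [h, not_lt_of_gt h, h.ne, h.ne']

/-- Binarization preserves satisfaction under lexicographic models: replacing the
values of `α, β` at each variable by `1/0`, `0/1` or `0/0` according to whether
`α(v) > β(v)`, `α(v) < β(v)` or `α(v) = β(v)` does not change satisfaction of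
`α ≥ β` nor of `α > β` in any lexicographic model. -/
theorem binarization_preserves_sat {V W : Type*} [LinearOrder W]
    (α β : V → W) (π : List V) (hne : π ≠ []) (hnd : π.Nodup) :
    (LexGe π α β ↔
      LexGe π (fun v => if β v < α v then (1 : ℕ) else 0)
              (fun v => if α v < β v then (1 : ℕ) else 0)) ∧
    (LexGt π α β ↔
      LexGt π (fun v => if β v < α v then (1 : ℕ) else 0)
              (fun v => if α v < β v then (1 : ℕ) else 0)) := by
  have key := fun v => binarize_key (α v) (β v)
  unfold LexGe LexGt
  constructor
  · apply or_congr
    · exact forall₂_congr fun v _ => (key v).1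
    · exact exists_congr fun i => and_congr ((key _).2) <|
        forall₂_congr fun j _ => (key _).1
  · exact exists_congr fun i => and_congr ((key _).2) <|
      forall₂_congr fun j _ => (key _).1
end

section
/- Let π = (v_1,…,v_k) be a lexicographic model over binary variables and suppose π satisfies the non-strict statement α ≥ β where α, β are binary alternatives with α(v) < β(v) for some variable v. Then either v does not appear in π, or some variable v' with α(v') > β(v') precedes the first occurrence of v in π. Consequently, π also satisfies the statement 1⃗_v ≥ 0⃗_v, where 1⃗_v is the alternative assigning 1 to all variables except v (which gets 0) and 0⃗_v assigns 0 to all variables except v (which gets 1). -/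
namespace LexGe

variable {V W : Type*} [LinearOrder W] {π : List V} {α β : V → W}

theorem exists_gt_before_of_lt (h : LexGe π α β) {v : V} (hv : α v < β v) (hvπ : v ∈ π) :
    ∃ j : Fin π.length, α (π.get j) > β (π.get j) ∧
      ∀ k : Fin π.length, π.get k = v → (j : ℕ) < (k : ℕ) := by
  rcases h with hall | ⟨i, hi, hbefore⟩
  · exact absurd (hall v hvπ) hv.ne
  · refine ⟨i, hi, fun k hk => ?_⟩
    rcases lt_trichotomy (k : ℕ) i with hki | hki | hki
    · exact absurd (hk ▸ hbefore k hki) hv.ne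
    · rw [← Fin.ext hki, hk] at hi
      exact absurd hi hv.not_gt
    · exact hki

theorem cons_of_gt {w : V} {l : List V} (hw : α w > β w) : LexGe (w :: l) α β :=
  Or.inr ⟨⟨0, l.length.succ_pos⟩, hw, fun _ hj => absurd hj (Nat.not_lt_zero _)⟩

end LexGe

theorem lexGe_vec_of_lt_general {V : Type*} [DecidableEq V]
    (π : List V) (α β : V → ℕ)
    (hsat : LexGe π α β) (v : V) (hv : α v < β v) :
    ((v ∉ π) ∨
      ∃ j : Fin π.length, α (π.get j) > β (π.get j) ∧
        ∀ k : Fin π.length, π.get k = v → (j : ℕ) < (k : ℕ)) ∧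
    LexGe π (fun w => if w = v then (0 : ℕ) else 1)
            (fun w => if w = v then (1 : ℕ) else 0) := by
  have hfirst := (em (v ∈ π)).symm.imp id (hsat.exists_gt_before_of_lt hv)
  refine ⟨hfirst, ?_⟩
  cases π with
  | nil => exact Or.inl fun w hw => absurd hw List.not_mem_nil
  | cons w l =>
    have hwv : w ≠ v := by
      rintro rfl
      rcases hfirst with hnot | ⟨j, -, hj⟩
      · exact hnot List.mem_cons_self
      · exact Nat.not_lt_zero _ (hj ⟨0, l.length.succ_pos⟩ rfl)
    exact LexGe.cons_of_gt (by simp [hwv])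

/-- If a lexicographic model over binary variables satisfies `α ≥ β` where
`α(v) < β(v)`, then `v` does not appear in `π`, or a variable `v'` with
`α(v') > β(v')` precedes the first occurrence of `v`; consequently `π` satisfies
`1⃗_v ≥ 0⃗_v`. -/
theorem lexGe_vec_of_lt {V : Type*} [DecidableEq V]
    (π : List V) (hne : π ≠ []) (α β : V → ℕ)
    (hbin : ∀ w : V, α w ≤ 1 ∧ β w ≤ 1)
    (hsat : LexGe π α β) (v : V) (hv : α v < β v) :
    ((v ∉ π) ∨
      ∃ j : Fin π.length, α (π.get j) > β (π.get j) ∧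
        ∀ k : Fin π.length, π.get k = v → (j : ℕ) < (k : ℕ)) ∧
    LexGe π (fun w => if w = v then (0 : ℕ) else 1)
            (fun w => if w = v then (1 : ℕ) else 0) :=
  lexGe_vec_of_lt_general π α β hsat v hv
end

section
/- Subset Sum reduction correctness: let S be a finite multiset of positive integers and T a positive integer. Construct variables {v_a : a ∈ S} ∪ {v_T} with natural-number values, operator ⊕ = addition, and alternatives α_T, β_T, α_Σ, β_Σ defined by: α_T(v_a)=0 for a∈S and α_T(v_T)=1; β_T ≡ 0; α_Σ(v_a)=a and α_Σ(v_T)=0; β_Σ(v_a)=0 and β_Σ(v_T)=T. Then there exists a hierarchical model satisfying all three statements α_T > β_T, α_Σ ≥ β_Σ, and β_Σ ≥ α_Σ if and only if there exists a sub-multiset A ⊆ S with Σ_{a∈A} a = T. -/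
/-- `π ⊨ α ≥ β` for a hierarchical model `π` with `⊕` = addition:
lexicographic comparison of the level-wise sums. -/
def SumGe {V : Type*} (π : List (Finset V)) (α β : V → ℕ) : Prop :=
  (∀ Y ∈ π, ∑ y ∈ Y, α y = ∑ y ∈ Y, β y) ∨
  ∃ i : Fin π.length, ∑ y ∈ π.get i, α y > ∑ y ∈ π.get i, β y ∧
    ∀ j : Fin π.length, (j : ℕ) < (i : ℕ) → ∑ y ∈ π.get j, α y = ∑ y ∈ π.get j, β y

/-- `π ⊨ α > β` for a hierarchical model `π` with `⊕` = addition. -/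
def SumGt {V : Type*} (π : List (Finset V)) (α β : V → ℕ) : Prop :=
  ∃ i : Fin π.length, ∑ y ∈ π.get i, α y > ∑ y ∈ π.get i, β y ∧
    ∀ j : Fin π.length, (j : ℕ) < (i : ℕ) → ∑ y ∈ π.get j, α y = ∑ y ∈ π.get j, β y

/-!
A model satisfying `α_T > β_T` has a level `Y` containing `v_T`, and `α_Σ ≥ β_Σ ≥ α_Σ`
forces every level sum of `α_Σ` and `β_Σ` to agree; on `Y` this says that the elements
of `S` indexed by `Y` sum to `T`. Conversely, if `A` sums to `T`, the one-level model
`A ∪ {v_T}` satisfies all three statements.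
-/

section HierarchicalModel

variable {V : Type*} {π : List (Finset V)} {α β : V → ℕ}

theorem SumGe.antisymm (hαβ : SumGe π α β) (hβα : SumGe π β α) :
    ∀ Y ∈ π, ∑ y ∈ Y, α y = ∑ y ∈ Y, β y := by
  rcases hαβ with hαβ | ⟨i, hi, hbefore_i⟩
  · exact hαβ
  rcases hβα with hβα | ⟨j, hj, hbefore_j⟩
  · have := hβα (π.get i) (π.get_mem i); omega
  rcases lt_trichotomy (i : ℕ) j with hij | hij | hij
  · have := hbefore_j i hij; omega
  · obtain rfl : i = j := Fin.ext hij
    omega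
  · have := hbefore_i j hij; omega

theorem SumGt.exists_mem (h : SumGt π α β) : ∃ Y ∈ π, ∑ y ∈ Y, β y < ∑ y ∈ Y, α y :=
  let ⟨i, hi, _⟩ := h
  ⟨π.get i, π.get_mem i, hi⟩

theorem sumGt_singleton {Y : Finset V} : SumGt [Y] α β ↔ ∑ y ∈ Y, β y < ∑ y ∈ Y, α y :=
  ⟨fun h => by simpa using h.exists_mem, fun h => ⟨⟨0, by simp⟩, h, fun j hj => by simp at hj⟩⟩

end HierarchicalModel

namespace Finset

variable {ι M : Type*} [AddCommMonoid M] {Y : Finset (Option ι)}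

theorem sum_option_elim_of_none_mem (h : none ∈ Y) (a : M) (f : ι → M) :
    ∑ y ∈ Y, y.elim a f = a + ∑ i ∈ Y.eraseNone, f i := by
  classical
  calc ∑ y ∈ Y, y.elim a f = ∑ y ∈ insertNone Y.eraseNone, y.elim a f := by
        rw [insertNone_eraseNone, insert_eq_of_mem h]
    _ = a + ∑ i ∈ Y.eraseNone, f i := sum_insertNone _ _

theorem none_mem_of_sum_option_elim_ne_zero {a : M}
    (h : ∑ y ∈ Y, y.elim a (fun _ => 0) ≠ 0) : none ∈ Y := by
  contrapose! h
  exact sum_eq_zero fun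
    | none, hy => absurd hy h
    | some _, _ => rfl

end Finset

/-- `none` plays the role of `v_T` and `some i` that of `v_{s i}`. -/
theorem subsetSum_reduction_general {n : ℕ} (s : Fin n → ℕ)
    (T : ℕ) :
    (∃ π : List (Finset (Option (Fin n))), ValidH π ∧
        SumGt π (fun v => v.elim 1 (fun _ => 0)) (fun _ => 0) ∧
        SumGe π (fun v => v.elim 0 s) (fun v => v.elim T (fun _ => 0)) ∧
        SumGe π (fun v => v.elim T (fun _ => 0)) (fun v => v.elim 0 s)) ↔
      ∃ A : Finset (Fin n), ∑ i ∈ A, s i = T := by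
  constructor
  · rintro ⟨π, -, hgt, hge, hle⟩
    obtain ⟨Y, hY, hpos⟩ := hgt.exists_mem
    have hnone : none ∈ Y := Finset.none_mem_of_sum_option_elim_ne_zero
      (by rw [Finset.sum_const_zero] at hpos; exact hpos.ne')
    have hsums := hge.antisymm hle Y hY
    rw [Finset.sum_option_elim_of_none_mem hnone, Finset.sum_option_elim_of_none_mem hnone]
      at hsums
    exact ⟨Y.eraseNone, by simpa using hsums⟩
  · rintro ⟨A, hA⟩
    refine ⟨[A.insertNone], ⟨by simp, by simp [Finset.insertNone_nonempty]⟩,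
      sumGt_singleton.2 ?_, Or.inl ?_, Or.inl ?_⟩ <;> simp [hA]

/-- Correctness of the reduction from Subset Sum: with variables
`Option (Fin n)` (where `none` plays the role of `v_T` and `some i` of `v_{s i}`),
there is a hierarchical model satisfying `α_T > β_T`, `α_Σ ≥ β_Σ` and
`β_Σ ≥ α_Σ` iff some subset of the multiset `s` sums to `T`. -/
theorem subsetSum_reduction {n : ℕ} (s : Fin n → ℕ) (hs : ∀ i, 0 < s i)
    (T : ℕ) (hT : 0 < T) :
    (∃ π : List (Finset (Option (Fin n))), ValidH π ∧
        SumGt π (fun v => v.elim 1 (fun _ => 0)) (fun _ => 0) ∧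
        SumGe π (fun v => v.elim 0 s) (fun v => v.elim T (fun _ => 0)) ∧
        SumGe π (fun v => v.elim T (fun _ => 0)) (fun v => v.elim 0 s)) ↔
      ∃ A : Finset (Fin n), ∑ i ∈ A, s i = T :=
  subsetSum_reduction_general s T
end
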